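/- arXiv:1106.0053 — 4 statements merged into one kernel-verified Lean document; each statement's English description precedes it below -/
import Mathlib

section
/- Let K : ℝ → ℝ be continuous with K(t) ≤ 0 for all t, and let j : ℝ → ℝ be twice differentiable with j''(t) + K(t)·j(t) = 0 for all t ∈ ℝ. If j is bounded on ℝ (there is M with |j(t)| ≤ M for all t), then j'(t) = 0 and K(t)·j(t) = 0 for all t; in particular j is constant. -/
/-!
Along a solution of `j'' + K j = 0` with `K ≤ 0`, the derivative of `j j'` is
`j'² - K j² ≥ 0`, so `(j²)' = 2 j j'` is monotone and `j²` is convex. A convex function on `ℝ`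
lies above its tangent lines, so if it is bounded it has zero derivative everywhere. Hence
`j j' ≡ 0`, so its derivative `j'² - K j²`, a sum of two nonnegative terms, vanishes identically.
-/

open Set

theorem tangent_le_of_hasDerivAt_of_monotone {g g' : ℝ → ℝ} (hg : ∀ t, HasDerivAt g (g' t) t)
    (hmono : Monotone g') (s t : ℝ) : g s + g' s * (t - s) ≤ g t := by
  have hconv : ConvexOn ℝ univ g := by
    refine Monotone.convexOn_univ_of_deriv (fun x ↦ (hg x).differentiableAt) ?_
    rwa [show deriv g = g' from funext fun x ↦ (hg x).deriv]
  rcases lt_trichotomy s t with hst | rfl | hts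
  · have h := hconv.le_slope_of_hasDerivAt (mem_univ s) (mem_univ t) hst (hg s)
    rw [slope_def_field, le_div_iff₀ (sub_pos.mpr hst)] at h
    linarith
  · simp
  · have h := hconv.slope_le_of_hasDerivAt (mem_univ t) (mem_univ s) hts (hg s)
    rw [slope_def_field, div_le_iff₀ (sub_pos.mpr hts)] at h
    linarith

theorem deriv_eq_zero_of_monotone_of_bddAbove {g g' : ℝ → ℝ} (hg : ∀ t, HasDerivAt g (g' t) t)
    (hmono : Monotone g') (hbdd : BddAbove (range g)) (s : ℝ) : g' s = 0 := by
  by_contra hs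
  obtain ⟨B, hB⟩ := hbdd
  set t := s + (B + 1 - g s) / g' s
  have htangent := tangent_le_of_hasDerivAt_of_monotone hg hmono s t
  have hslope : g' s * (t - s) = B + 1 - g s := by
    simp only [t, add_sub_cancel_left]
    field_simp
  linarith [hB (mem_range_self t)]

theorem sq_sub_mul_sq_nonneg {k : ℝ} (hk : k ≤ 0) (a b : ℝ) : 0 ≤ a ^ 2 - k * b ^ 2 := by
  nlinarith [sq_nonneg a, mul_nonpos_of_nonpos_of_nonneg hk (sq_nonneg b)]

theorem eq_zero_and_mul_eq_zero_of_sq_sub_mul_sq_eq_zero {k a b : ℝ} (hk : k ≤ 0)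
    (h : a ^ 2 - k * b ^ 2 = 0) : a = 0 ∧ k * b = 0 := by
  have hkb : k * b ^ 2 ≤ 0 := mul_nonpos_of_nonpos_of_nonneg hk (sq_nonneg b)
  have ha : a = 0 := by nlinarith [sq_nonneg a]
  refine ⟨ha, ?_⟩
  have hkbb : k * b * b = 0 := by rw [ha] at h; linarith
  rcases mul_eq_zero.mp hkbb with h | h
  · exact h
  · rw [h, mul_zero]

section Jacobi

variable {K j j' j'' : ℝ → ℝ}

theorem hasDerivAt_mul_deriv_of_jacobi (hj : ∀ t, HasDerivAt j (j' t) t)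
    (hj' : ∀ t, HasDerivAt j' (j'' t) t) (hJacobi : ∀ t, j'' t + K t * j t = 0) (t : ℝ) :
    HasDerivAt (fun t ↦ j t * j' t) (j' t ^ 2 - K t * j t ^ 2) t := by
  have hj'' : j'' t = -(K t * j t) := eq_neg_of_add_eq_zero_left (hJacobi t)
  refine ((hj t).mul (hj' t)).congr_deriv ?_
  rw [hj'']
  ring

theorem mul_deriv_eq_zero_of_jacobi_of_bounded (hKle : ∀ t, K t ≤ 0)
    (hj : ∀ t, HasDerivAt j (j' t) t) (hj' : ∀ t, HasDerivAt j' (j'' t) t)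
    (hJacobi : ∀ t, j'' t + K t * j t = 0) {M : ℝ} (hbd : ∀ t, |j t| ≤ M) (t : ℝ) :
    j t * j' t = 0 := by
  have hsq : ∀ t, HasDerivAt (fun t ↦ j t ^ 2) (2 * (j t * j' t)) t := fun t ↦ by
    refine ((hj t).pow 2).congr_deriv ?_
    ring
  have hmono : Monotone fun t ↦ 2 * (j t * j' t) :=
    (monotone_of_hasDerivAt_nonneg (hasDerivAt_mul_deriv_of_jacobi hj hj' hJacobi)
      fun t ↦ sq_sub_mul_sq_nonneg (hKle t) _ _).const_mul zero_le_two
  have hbdd : BddAbove (range fun t ↦ j t ^ 2) := by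
    refine ⟨M ^ 2, forall_mem_range.mpr fun t ↦ ?_⟩
    simpa only [sq_abs] using pow_le_pow_left₀ (abs_nonneg (j t)) (hbd t) 2
  have := deriv_eq_zero_of_monotone_of_bddAbove hsq hmono hbdd t
  linarith

end Jacobi

theorem stmt_2_general (K j j' j'' : ℝ → ℝ)
    (hKle : ∀ t, K t ≤ 0)
    (hj : ∀ t, HasDerivAt j (j' t) t)
    (hj' : ∀ t, HasDerivAt j' (j'' t) t)
    (hJacobi : ∀ t, j'' t + K t * j t = 0)
    (M : ℝ) (hbd : ∀ t, |j t| ≤ M) :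
    (∀ t, j' t = 0) ∧ (∀ t, K t * j t = 0) ∧ (∀ s t, j s = j t) := by
  have hprod : (fun t ↦ j t * j' t) = fun _ ↦ 0 :=
    funext (mul_deriv_eq_zero_of_jacobi_of_bounded hKle hj hj' hJacobi hbd)
  have henergy (t : ℝ) : j' t ^ 2 - K t * j t ^ 2 = 0 := by
    have h := hasDerivAt_mul_deriv_of_jacobi hj hj' hJacobi t
    rw [hprod] at h
    exact h.unique (hasDerivAt_const t 0)
  have hzero (t : ℝ) := eq_zero_and_mul_eq_zero_of_sq_sub_mul_sq_eq_zero (hKle t) (henergy t)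
  have hj'0 (t : ℝ) : j' t = 0 := (hzero t).1
  refine ⟨hj'0, fun t ↦ (hzero t).2, fun s t ↦ ?_⟩
  exact is_const_of_deriv_eq_zero (fun x ↦ (hj x).differentiableAt)
    (fun x ↦ by rw [(hj x).deriv, hj'0 x]) s t

/-- a bounded solution of the Jacobi equation `j'' + K j = 0` with `K ≤ 0`
has `j' ≡ 0` and `K j ≡ 0`; in particular `j` is constant. -/
theorem stmt_2 (K j j' j'' : ℝ → ℝ)
    (hK : Continuous K) (hKle : ∀ t, K t ≤ 0)
    (hj : ∀ t, HasDerivAt j (j' t) t)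
    (hj' : ∀ t, HasDerivAt j' (j'' t) t)
    (hJacobi : ∀ t, j'' t + K t * j t = 0)
    (M : ℝ) (hbd : ∀ t, |j t| ≤ M) :
    (∀ t, j' t = 0) ∧ (∀ t, K t * j t = 0) ∧ (∀ s t, j s = j t) :=
  stmt_2_general K j j' j'' hKle hj hj' hJacobi M hbd
end

section
/- Let K : ℝ → ℝ be continuous, τ > 0, and let u : ℝ → ℝ be differentiable with u(t + τ) = u(t) for all t and u'(t) + u(t)² + K(t) = 0 for all t ∈ ℝ. Then (1/τ)·∫₀^τ u(t)² dt = −(1/τ)·∫₀^τ K(t) dt, and (1/τ)·∫₀^τ u(t) dt ≤ √( −(1/τ)·∫₀^τ K(t) dt ). -/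
/-!
Since `u` is periodic, `∫₀^τ u' = u τ - u 0 = 0`, so integrating the Riccati equation over a
period gives `∫₀^τ u² = -∫₀^τ K`. The inequality is then Jensen's inequality for the square,
`(⨍ u)² ≤ ⨍ u²`, followed by `⨍ u ≤ |⨍ u| ≤ √(⨍ u²)`.
-/

open MeasureTheory Function

theorem Function.Periodic.intervalIntegral_deriv_eq_zero {E : Type*} [NormedAddCommGroup E]
    [NormedSpace ℝ E] [CompleteSpace E] {u u' : ℝ → E} {τ : ℝ} (hper : Periodic u τ)
    (hu : ∀ t, HasDerivAt u (u' t) t) (hu' : IntervalIntegrable u' volume 0 τ) :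
    ∫ t in (0 : ℝ)..τ, u' t = 0 := by
  rw [intervalIntegral.integral_eq_sub_of_hasDerivAt (fun t _ => hu t) hu', hper.eq, sub_self]

theorem integral_sq_eq_neg_integral_of_riccati {K u u' : ℝ → ℝ} {τ : ℝ} (hK : Continuous K)
    (hu : ∀ t, HasDerivAt u (u' t) t) (hper : Periodic u τ)
    (hric : ∀ t, u' t + u t ^ 2 + K t = 0) :
    ∫ t in (0 : ℝ)..τ, u t ^ 2 = -∫ t in (0 : ℝ)..τ, K t := by
  have hu_cont : Continuous u := continuous_iff_continuousAt.2 fun t => (hu t).continuousAt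
  have hu'_cont : Continuous u' := by
    rw [show u' = fun t => -u t ^ 2 - K t from funext fun t => by linarith [hric t]]
    fun_prop
  have hu'_int : ∫ t in (0 : ℝ)..τ, u' t = 0 :=
    hper.intervalIntegral_deriv_eq_zero hu (hu'_cont.intervalIntegrable 0 τ)
  calc ∫ t in (0 : ℝ)..τ, u t ^ 2 = ∫ t in (0 : ℝ)..τ, (-u' t - K t) :=
        intervalIntegral.integral_congr fun t _ => by linarith [hric t]
    _ = -∫ t in (0 : ℝ)..τ, K t := by
        rw [intervalIntegral.integral_sub (f := fun t => -u' t)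
          (hu'_cont.neg.intervalIntegrable 0 τ) (hK.intervalIntegrable 0 τ),
          intervalIntegral.integral_neg, hu'_int, neg_zero, zero_sub]

theorem sq_intervalAverage_le {f : ℝ → ℝ} {a b : ℝ} (hf : IntervalIntegrable f volume a b)
    (hf_sq : IntervalIntegrable (fun x => f x ^ 2) volume a b) :
    (⨍ x in a..b, f x) ^ 2 ≤ ⨍ x in a..b, f x ^ 2 := by
  rcases eq_or_ne a b with rfl | hab
  · simp
  have h_vol_ne_zero : volume (Set.uIoc a b) ≠ 0 := by
    simpa [Real.volume_uIoc, sub_eq_zero] using hab.symm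
  exact (even_two.convexOn_pow (𝕜 := ℝ)).map_set_average_le (continuous_pow 2).continuousOn
    isClosed_univ h_vol_ne_zero (by simp [Real.volume_uIoc]) (by simp) hf.def' hf_sq.def'

theorem stmt_3_general (K u u' : ℝ → ℝ) (τ : ℝ)
    (hK : Continuous K)
    (hu : ∀ t, HasDerivAt u (u' t) t)
    (hper : ∀ t, u (t + τ) = u t)
    (hric : ∀ t, u' t + u t ^ 2 + K t = 0) :
    (1 / τ) * ∫ t in (0:ℝ)..τ, u t ^ 2 = -((1 / τ) * ∫ t in (0:ℝ)..τ, K t) ∧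
    (1 / τ) * ∫ t in (0:ℝ)..τ, u t ≤
      Real.sqrt (-((1 / τ) * ∫ t in (0:ℝ)..τ, K t)) := by
  have h_mean_sq : (1 / τ) * ∫ t in (0:ℝ)..τ, u t ^ 2 = -((1 / τ) * ∫ t in (0:ℝ)..τ, K t) := by
    rw [integral_sq_eq_neg_integral_of_riccati hK hu hper hric, mul_neg]
  refine ⟨h_mean_sq, ?_⟩
  have h_mean_eq_avg (f : ℝ → ℝ) :
      (1 / τ) * ∫ t in (0:ℝ)..τ, f t = ⨍ t in (0:ℝ)..τ, f t := by
    rw [interval_average_eq, sub_zero, smul_eq_mul, one_div]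
  have hu_cont : Continuous u := continuous_iff_continuousAt.2 fun t => (hu t).continuousAt
  rw [← h_mean_sq, h_mean_eq_avg, h_mean_eq_avg]
  exact (le_abs_self _).trans <| Real.abs_le_sqrt <| sq_intervalAverage_le
    (hu_cont.intervalIntegrable 0 τ) ((hu_cont.pow 2).intervalIntegrable 0 τ)

/-- integrating the Riccati equation `u' + u² + K = 0` over a period, and
the Schwarz inequality (Lemma 2.9). -/
theorem stmt_3 (K u u' : ℝ → ℝ) (τ : ℝ)
    (hK : Continuous K) (hτ : 0 < τ)
    (hu : ∀ t, HasDerivAt u (u' t) t)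
    (hper : ∀ t, u (t + τ) = u t)
    (hric : ∀ t, u' t + u t ^ 2 + K t = 0) :
    (1 / τ) * ∫ t in (0:ℝ)..τ, u t ^ 2 = -((1 / τ) * ∫ t in (0:ℝ)..τ, K t) ∧
    (1 / τ) * ∫ t in (0:ℝ)..τ, u t ≤
      Real.sqrt (-((1 / τ) * ∫ t in (0:ℝ)..τ, K t)) :=
  stmt_3_general K u u' τ hK hu hper hric
end

section
/- Let k ≥ 0 and let K : ℝ → ℝ be continuous with −k² ≤ K(t) for all t. Let u : ℝ → ℝ be differentiable on all of ℝ with u'(t) = −u(t)² − K(t) for all t and u(t) ≥ 0 for all t. Then u(t) ≤ k for all t ∈ ℝ. -/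
/-!
Set `ψ = (u - k) / (u + k)` for `k > 0`. The Riccati inequality `u' ≤ k² - u²` becomes the linear
inequality `ψ' ≤ -2k ψ`, so `e^{2kt} ψ(t)` is antitone. If `ψ(t₀) > 0`, then
`e^{2kt} ψ(t) ≥ e^{2kt₀} ψ(t₀) > 0` for all `t ≤ t₀`, which is impossible since `ψ < 1` and
`e^{2kt} → 0` as `t → -∞`. Hence `ψ ≤ 0`, i.e. `u ≤ k`; the case `k = 0` follows by letting `k ↓ 0`.
-/

open Real Filter Topology

theorem antitone_exp_mul_of_hasDerivAt_le_neg_mul {c : ℝ} {f f' : ℝ → ℝ}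
    (hf : ∀ t, HasDerivAt f (f' t) t) (hle : ∀ t, f' t ≤ -c * f t) :
    Antitone fun t => exp (c * t) * f t := by
  refine antitone_of_hasDerivAt_nonpos
    (fun t => (((hasDerivAt_id t).const_mul c).exp).mul (hf t)) fun t => ?_
  show _ ≤ (0 : ℝ)
  have h : c * f t + f' t ≤ 0 := by linarith [hle t]
  simpa only [id_eq, mul_one, mul_assoc, ← mul_add] using
    mul_nonpos_of_nonneg_of_nonpos (exp_pos (c * t)).le h

theorem nonpos_of_hasDerivAt_le_neg_mul {c M : ℝ} {f f' : ℝ → ℝ} (hc : 0 < c)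
    (hf : ∀ t, HasDerivAt f (f' t) t) (hle : ∀ t, f' t ≤ -c * f t) (hM : ∀ t, f t ≤ M) (t₀ : ℝ) :
    f t₀ ≤ 0 := by
  by_contra! hpos
  have hdecay : Tendsto (fun t => exp (c * t) * M) atBot (𝓝 0) := by
    simpa using (tendsto_exp_atBot.comp (tendsto_id.const_mul_atBot hc)).mul_const M
  obtain ⟨t, hsmall, ht⟩ :=
    ((hdecay.eventually (gt_mem_nhds (mul_pos (exp_pos (c * t₀)) hpos))).and
      (eventually_le_atBot t₀)).exists
  have hmono := antitone_exp_mul_of_hasDerivAt_le_neg_mul hf hle ht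
  have hbound : exp (c * t) * f t ≤ exp (c * t) * M :=
    mul_le_mul_of_nonneg_left (hM t) (exp_pos _).le
  exact (hmono.trans hbound).not_gt hsmall

theorem le_of_hasDerivAt_le_sq_sub_sq_of_pos {k : ℝ} {u u' : ℝ → ℝ} (hk : 0 < k)
    (hu : ∀ t, HasDerivAt u (u' t) t) (hric : ∀ t, u' t ≤ k ^ 2 - u t ^ 2)
    (hnn : ∀ t, 0 ≤ u t) (t₀ : ℝ) : u t₀ ≤ k := by
  have hpos : ∀ t, 0 < u t + k := fun t => by linarith [hnn t]
  have hψ : ∀ t, HasDerivAt (fun s => (u s - k) / (u s + k))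
      (2 * k * u' t / (u t + k) ^ 2) t := fun t =>
    (((hu t).sub_const k).div ((hu t).add_const k) (hpos t).ne').congr_deriv (by ring)
  have hψ_le : ∀ t, 2 * k * u' t / (u t + k) ^ 2 ≤ -(2 * k) * ((u t - k) / (u t + k)) := by
    intro t
    have hut := hpos t
    calc 2 * k * u' t / (u t + k) ^ 2 ≤ 2 * k * ((k - u t) * (u t + k)) / (u t + k) ^ 2 := by
          gcongr; linarith [hric t]
      _ = -(2 * k) * ((u t - k) / (u t + k)) := by field_simp; ring
  have hψ_le_one : ∀ t, (u t - k) / (u t + k) ≤ 1 := fun t =>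
    (div_le_one (hpos t)).2 (by linarith)
  have := nonpos_of_hasDerivAt_le_neg_mul (by positivity) hψ hψ_le hψ_le_one t₀
  rwa [div_le_iff₀ (hpos t₀), zero_mul, sub_nonpos] at this

theorem le_of_hasDerivAt_le_sq_sub_sq {k : ℝ} {u u' : ℝ → ℝ} (hk : 0 ≤ k)
    (hu : ∀ t, HasDerivAt u (u' t) t) (hric : ∀ t, u' t ≤ k ^ 2 - u t ^ 2)
    (hnn : ∀ t, 0 ≤ u t) (t₀ : ℝ) : u t₀ ≤ k :=
  le_of_forall_pos_le_add fun ε hε =>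
    le_of_hasDerivAt_le_sq_sub_sq_of_pos (by positivity) hu
      (fun t => (hric t).trans (by gcongr; linarith)) hnn t₀

theorem stmt_4_general (k : ℝ) (hk : 0 ≤ k) (K u u' : ℝ → ℝ)
    (hKlb : ∀ t, -k ^ 2 ≤ K t)
    (hu : ∀ t, HasDerivAt u (u' t) t)
    (hric : ∀ t, u' t = -(u t) ^ 2 - K t)
    (hnn : ∀ t, 0 ≤ u t) :
    ∀ t, u t ≤ k :=
  le_of_hasDerivAt_le_sq_sub_sq hk hu (fun t => by linarith [hric t, hKlb t]) hnn

/-- a globally defined nonnegative solution of the Riccati equation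
`u' = -u² - K` with `K ≥ -k²` satisfies `u ≤ k` (Eberlein's estimate). -/
theorem stmt_4 (k : ℝ) (hk : 0 ≤ k) (K u u' : ℝ → ℝ)
    (hK : Continuous K) (hKlb : ∀ t, -k ^ 2 ≤ K t)
    (hu : ∀ t, HasDerivAt u (u' t) t)
    (hric : ∀ t, u' t = -(u t) ^ 2 - K t)
    (hnn : ∀ t, 0 ≤ u t) :
    ∀ t, u t ≤ k :=
  stmt_4_general k hk K u u' hKlb hu hric hnn
end

section
/- Let ι be a nonempty index set, H, C ≥ 0, and h, χ : ι → ℝ with 0 ≤ h(i) ≤ H and 0 ≤ χ(i) ≤ C for all i. Define P : ℝ → ℝ by P(q) = ⨆ᵢ (h(i) − q·χ(i)). Then P(q)/q → −(⨅ᵢ χ(i)) as q → +∞, and P(q)/q → −(⨆ᵢ χ(i)) as q → −∞. -/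
/-!
For `q > 0` every term `h i - q * χ i` lies between `a - q * χ i` and `b - q * χ i`, so the pressure
is pinned between `a - q * ⨅ χ` and `b - q * ⨅ χ`; dividing by `q` squeezes `P(q) / q` to `-⨅ χ`.
The limit at `-∞` is the same statement for `-χ`, since `P_χ(q) = P_{-χ}(-q)`.
-/

open Filter Set Topology

section

variable {ι : Type*} {h χ : ι → ℝ} {a b : ℝ}

noncomputable def pressure (h χ : ι → ℝ) (q : ℝ) : ℝ := ⨆ i, (h i - q * χ i)

lemma pressure_neg_neg (q : ℝ) : pressure h (-χ) (-q) = pressure h χ q := by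
  simp only [pressure, Pi.neg_apply, neg_mul_neg]

variable [Nonempty ι]

lemma pressure_mem_Icc (hh : ∀ i, h i ∈ Icc a b) (hχ : BddBelow (range χ)) {q : ℝ} (hq : 0 ≤ q) :
    pressure h χ q ∈ Icc (a - q * ⨅ i, χ i) (b - q * ⨅ i, χ i) := by
  have hχ_ge (i : ι) : q * ⨅ i, χ i ≤ q * χ i := mul_le_mul_of_nonneg_left (ciInf_le hχ i) hq
  have hbdd : BddAbove (range fun i => h i - q * χ i) := by
    refine ⟨b - q * ⨅ i, χ i, ?_⟩
    rintro _ ⟨i, rfl⟩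
    linarith [(hh i).2, hχ_ge i]
  constructor
  · rw [Real.mul_iInf_of_nonneg hq, sub_le_comm]
    refine le_ciInf fun i => ?_
    have : h i - q * χ i ≤ pressure h χ q := le_ciSup hbdd i
    linarith [(hh i).1]
  · exact ciSup_le fun i => by linarith [(hh i).2, hχ_ge i]

theorem tendsto_pressure_div_atTop (hh : ∀ i, h i ∈ Icc a b) (hχ : BddBelow (range χ)) :
    Tendsto (fun q => pressure h χ q / q) atTop (𝓝 (-⨅ i, χ i)) := by
  set L := ⨅ i, χ i
  have hlim (c : ℝ) : Tendsto (fun q => (c - q * L) / q) atTop (𝓝 (-L)) := by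
    have : Tendsto (fun q : ℝ => c / q - L) atTop (𝓝 (0 - L)) :=
      (tendsto_const_nhds.div_atTop tendsto_id).sub_const L
    refine (zero_sub L ▸ this).congr' ?_
    filter_upwards [eventually_ne_atTop 0] with q hq
    field_simp
  refine tendsto_of_tendsto_of_tendsto_of_le_of_le' (hlim a) (hlim b) ?_ ?_ <;>
    filter_upwards [eventually_gt_atTop 0] with q hq <;>
    gcongr
  exacts [(pressure_mem_Icc hh hχ hq.le).1, (pressure_mem_Icc hh hχ hq.le).2]

theorem tendsto_pressure_div_atBot (hh : ∀ i, h i ∈ Icc a b) (hχ : BddAbove (range χ)) :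
    Tendsto (fun q => pressure h χ q / q) atBot (𝓝 (-⨆ i, χ i)) := by
  have hχ' : BddBelow (range (-χ)) := by
    rw [← neg_range']
    exact hχ.neg
  have hinf : ⨅ i, (-χ) i = -⨆ i, χ i := by
    simpa using (Real.smul_iSup_of_nonpos (by norm_num : (-1 : ℝ) ≤ 0) χ).symm
  have hlim := ((tendsto_pressure_div_atTop hh hχ').neg).comp tendsto_neg_atBot_atTop
  rw [hinf, neg_neg] at hlim
  refine hlim.congr fun q => ?_
  simp only [Function.comp_apply, pressure_neg_neg, div_neg, neg_neg]

end

theorem stmt_6_general {ι : Type*} [Nonempty ι] (H C : ℝ)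
    (h χ : ι → ℝ) (hh : ∀ i, h i ∈ Set.Icc 0 H) (hχ : ∀ i, χ i ∈ Set.Icc 0 C) :
    Filter.Tendsto (fun q : ℝ => (⨆ i, (h i - q * χ i)) / q) Filter.atTop
      (nhds (-(⨅ i, χ i))) ∧
    Filter.Tendsto (fun q : ℝ => (⨆ i, (h i - q * χ i)) / q) Filter.atBot
      (nhds (-(⨆ i, χ i))) := by
  have hrange : range χ ⊆ Icc 0 C := range_subset_iff.2 hχ
  exact ⟨tendsto_pressure_div_atTop hh (bddBelow_Icc.mono hrange),
    tendsto_pressure_div_atBot hh (bddAbove_Icc.mono hrange)⟩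

/-- asymptotic slopes of the abstract pressure function
(Proposition 3.1 (2)): `P(q)/q → -⨅ χ` as `q → ∞` and `P(q)/q → -⨆ χ` as `q → -∞`. -/
theorem stmt_6 {ι : Type*} [Nonempty ι] (H C : ℝ) (hH : 0 ≤ H) (hC : 0 ≤ C)
    (h χ : ι → ℝ) (hh : ∀ i, h i ∈ Set.Icc 0 H) (hχ : ∀ i, χ i ∈ Set.Icc 0 C) :
    Filter.Tendsto (fun q : ℝ => (⨆ i, (h i - q * χ i)) / q) Filter.atTop
      (nhds (-(⨅ i, χ i))) ∧
    Filter.Tendsto (fun q : ℝ => (⨆ i, (h i - q * χ i)) / q) Filter.atBot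
      (nhds (-(⨆ i, χ i))) :=
  stmt_6_general H C h χ hh hχ
end
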